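/- arXiv:2007.14111 — 4 statements merged into one kernel-verified Lean document; each statement's English description precedes it below -/
import Mathlib

section
/- The Matula coding M is multiplicative with respect to the natural sum: for all α, β < ε₀, M(α ⊕ β) = M(α) · M(β), where ⊕ is the Hessenberg natural sum. -/
/-
Since `♯` is defined by recursion rather than through Cantor normal forms, the merging of normal
forms has to be recovered first: `ω^e ♯ b = ω^e + b` whenever `b < ω^(e+1)`. This absorption at
`e` follows from the closure of `Iio (ω^e)` under `♯`, and that closure from absorption at all
exponents below `e`. Writing `α = ω^e + a` with `e` the larger of the two leading exponents,
absorption gives `α ♯ β = ω^e + (a ♯ β)` in Cantor normal form, so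
`M (α ♯ β) = p_{M e} · M (a ♯ β)`, and induction on `α` and `β` finishes the proof.
-/

open Ordinal

/-- `ε₀` is the least ordinal `ξ` with `ω ^ ξ = ξ`. -/
noncomputable def eps0 : Ordinal := sInf {ξ : Ordinal | omega0 ^ ξ = ξ}

/-- `M` is the Matula coding of the ordinals below `ε₀`: `M 0 = 1` and
`M (ω^e + b) = p_{M e} · M b` when `ω^e + b` is in Cantor normal form
(i.e. `b < ω^(e+1)`), where `p_i` is the `i`-th prime with `p₀ = 2`
(here `p_i = Nat.nth Nat.Prime i`). -/
def IsMatula (M : Ordinal → ℕ) : Prop :=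
  M 0 = 1 ∧
    ∀ e b : Ordinal, omega0 ^ e + b < eps0 → b < omega0 ^ (e + 1) →
      M (omega0 ^ e + b) = Nat.nth Nat.Prime (M e) * M b

universe u

/-- Natural addition on ordinals (Hessenberg sum), as defined in the older Mathlib
(`Mathlib.SetTheory.Ordinal.NaturalOps`), which has since been removed from Mathlib. -/
noncomputable def Ordinal.nadd (a b : Ordinal.{u}) : Ordinal.{u} :=
  max (⨆ x : Set.Iio a, Order.succ (Ordinal.nadd x.1 b))
    (⨆ x : Set.Iio b, Order.succ (Ordinal.nadd a x.1))
termination_by (a, b)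
decreasing_by all_goals cases x; decreasing_tactic

namespace NaturalOps

infixl:65 " ♯ " => Ordinal.nadd

end NaturalOps

open NaturalOps

namespace Ordinal

theorem nadd_le_iff {a b c : Ordinal.{u}} :
    b ♯ c ≤ a ↔ (∀ b' < b, b' ♯ c < a) ∧ ∀ c' < c, b ♯ c' < a := by
  rw [nadd]
  simp only [max_le_iff, Ordinal.iSup_le_iff, Order.succ_le_iff, Subtype.forall, Set.mem_Iio]

theorem nadd_lt_nadd_left {b c : Ordinal.{u}} (h : b < c) (a : Ordinal.{u}) : a ♯ b < a ♯ c :=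
  (nadd_le_iff.1 le_rfl).2 b h

theorem nadd_lt_nadd_right {b c : Ordinal.{u}} (h : b < c) (a : Ordinal.{u}) : b ♯ a < c ♯ a :=
  (nadd_le_iff.1 le_rfl).1 b h

theorem nadd_le_nadd_left {b c : Ordinal.{u}} (h : b ≤ c) (a : Ordinal.{u}) : a ♯ b ≤ a ♯ c :=
  StrictMono.monotone (f := (a ♯ ·)) (fun _ _ h => nadd_lt_nadd_left h a) h

theorem nadd_le_nadd_right {b c : Ordinal.{u}} (h : b ≤ c) (a : Ordinal.{u}) : b ♯ a ≤ c ♯ a :=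
  StrictMono.monotone (f := (· ♯ a)) (fun _ _ h => nadd_lt_nadd_right h a) h

theorem le_nadd_self (a b : Ordinal.{u}) : b ≤ a ♯ b :=
  StrictMono.le_apply (f := (a ♯ ·)) fun _ _ h => nadd_lt_nadd_left h a

theorem lt_nadd_iff {a b c : Ordinal.{u}} :
    a < b ♯ c ↔ (∃ b' < b, a ≤ b' ♯ c) ∨ ∃ c' < c, a ≤ b ♯ c' := by
  rw [← not_le, nadd_le_iff]
  simp only [not_and_or, not_forall, not_lt, exists_prop]

theorem nadd_comm (a b : Ordinal.{u}) : a ♯ b = b ♯ a := by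
  induction a using WellFoundedLT.induction generalizing b with | _ a iha =>
  induction b using WellFoundedLT.induction with | _ b ihb =>
  apply le_antisymm <;> rw [nadd_le_iff] <;> constructor
  · intro x hx; rw [iha x hx b]; exact nadd_lt_nadd_left hx b
  · intro x hx; rw [ihb x hx]; exact nadd_lt_nadd_right hx a
  · intro x hx; rw [← ihb x hx]; exact nadd_lt_nadd_left hx a
  · intro x hx; rw [← iha x hx b]; exact nadd_lt_nadd_right hx b

@[simp]
theorem zero_nadd (a : Ordinal.{u}) : 0 ♯ a = a := by
  induction a using WellFoundedLT.induction with | _ a ih =>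
  refine le_antisymm (nadd_le_iff.2 ⟨fun x hx => (not_lt_zero hx).elim, ?_⟩) (le_nadd_self 0 a)
  intro x hx
  rwa [ih x hx]

@[simp]
theorem nadd_zero (a : Ordinal.{u}) : a ♯ 0 = a := by
  rw [nadd_comm, zero_nadd]

theorem add_le_nadd (a b : Ordinal.{u}) : a + b ≤ a ♯ b := by
  induction b using WellFoundedLT.induction with | _ b ih =>
  rcases eq_or_ne b 0 with rfl | hb
  · simp
  · exact (add_le_iff hb).2 fun d hd => (ih d hd).trans_lt (nadd_lt_nadd_left hd a)

theorem nadd_assoc (a b c : Ordinal.{u}) : a ♯ b ♯ c = a ♯ (b ♯ c) := by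
  induction a using WellFoundedLT.induction generalizing b c with | _ a iha =>
  induction b using WellFoundedLT.induction generalizing c with | _ b ihb =>
  induction c using WellFoundedLT.induction with | _ c ihc =>
  apply le_antisymm <;> rw [nadd_le_iff] <;> constructor
  · intro x hx
    rcases lt_nadd_iff.1 hx with ⟨a', ha', hx'⟩ | ⟨b', hb', hx'⟩
    · calc x ♯ c ≤ a' ♯ b ♯ c := nadd_le_nadd_right hx' c
        _ = a' ♯ (b ♯ c) := iha a' ha' b c
        _ < a ♯ (b ♯ c) := nadd_lt_nadd_right ha' _
    · calc x ♯ c ≤ a ♯ b' ♯ c := nadd_le_nadd_right hx' c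
        _ = a ♯ (b' ♯ c) := ihb b' hb' c
        _ < a ♯ (b ♯ c) := nadd_lt_nadd_left (nadd_lt_nadd_right hb' c) a
  · intro c' hc'
    rw [ihc c' hc']
    exact nadd_lt_nadd_left (nadd_lt_nadd_left hc' b) a
  · intro a' ha'
    rw [← iha a' ha' b c]
    exact nadd_lt_nadd_right (nadd_lt_nadd_right ha' b) c
  · intro y hy
    rcases lt_nadd_iff.1 hy with ⟨b', hb', hy'⟩ | ⟨c', hc', hy'⟩
    · calc a ♯ y ≤ a ♯ (b' ♯ c) := nadd_le_nadd_left hy' a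
        _ = a ♯ b' ♯ c := (ihb b' hb' c).symm
        _ < a ♯ b ♯ c := nadd_lt_nadd_right (nadd_lt_nadd_left hb' a) c
    · calc a ♯ y ≤ a ♯ (b ♯ c') := nadd_le_nadd_left hy' a
        _ = a ♯ b ♯ c' := (ihc c' hc').symm
        _ < a ♯ b ♯ c := nadd_lt_nadd_left hc' _

theorem nadd_left_comm (a b c : Ordinal.{u}) : a ♯ (b ♯ c) = b ♯ (a ♯ c) := by
  rw [← nadd_assoc, nadd_comm a b, nadd_assoc]

theorem lt_omega0_opow_log_add_one (a : Ordinal) : a < ω ^ (log ω a + 1) := by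
  simpa only [Order.succ_eq_add_one] using lt_opow_succ_log_self one_lt_omega0 a

theorem sub_omega0_opow_lt {e b : Ordinal} (h₁ : ω ^ e ≤ b) (h₂ : b < ω ^ (e + 1)) :
    b - ω ^ e < b := by
  have hb : b ≠ 0 := ((opow_pos e omega0_pos).trans_le h₁).ne'
  obtain rfl := (log_eq_iff one_lt_omega0 hb e).2 ⟨h₁, h₂⟩
  exact sub_omega0_opow_log_lt hb

section Absorption

variable {e : Ordinal.{u}}

theorem omega0_opow_nadd_of_isPrincipal (hP : IsPrincipal nadd (ω ^ e)) {b : Ordinal.{u}}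
    (hb : b < ω ^ (e + 1)) : ω ^ e ♯ b = ω ^ e + b := by
  suffices h : ∀ b : Ordinal.{u}, b < ω ^ (e + 1) →
      (∀ a < ω ^ e, a ♯ b < ω ^ e + b) ∧ ω ^ e ♯ b = ω ^ e + b from (h b hb).2
  intro b hb
  induction b using WellFoundedLT.induction with | _ b ih =>
  have nadd_lt : ∀ a < ω ^ e, a ♯ b < ω ^ e + b := by
    intro a ha
    rcases lt_or_ge b (ω ^ e) with hbe | hbe
    · exact (hP ha hbe).trans_le le_self_add
    set b₁ := b - ω ^ e
    have hb₁ : ω ^ e + b₁ = b := Ordinal.add_sub_cancel_of_le hbe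
    have hb₁b : b₁ < b := sub_omega0_opow_lt hbe hb
    obtain ⟨hab₁, hb₁_eq⟩ := ih b₁ hb₁b (hb₁b.trans hb)
    have hab₁b : a ♯ b₁ < b := hb₁ ▸ hab₁ a ha
    calc a ♯ b = ω ^ e ♯ (a ♯ b₁) := by rw [← hb₁, ← hb₁_eq, nadd_left_comm]
      _ = ω ^ e + (a ♯ b₁) := (ih _ hab₁b (hab₁b.trans hb)).2
      _ < ω ^ e + b := add_lt_add_right hab₁b _
  refine ⟨nadd_lt, le_antisymm (nadd_le_iff.2 ⟨nadd_lt, fun b' hb' => ?_⟩) (add_le_nadd _ _)⟩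
  rw [(ih b' hb' (hb'.trans hb)).2]
  exact add_lt_add_right hb' _

theorem omega0_opow_add_nadd_of_isPrincipal (hP : IsPrincipal nadd (ω ^ e)) {a c : Ordinal.{u}}
    (ha : a < ω ^ (e + 1)) (hac : a ♯ c < ω ^ (e + 1)) :
    (ω ^ e + a) ♯ c = ω ^ e + (a ♯ c) := by
  rw [← omega0_opow_nadd_of_isPrincipal hP ha, nadd_assoc, omega0_opow_nadd_of_isPrincipal hP hac]

theorem isPrincipal_nadd_omega0_opow_succ (hP : IsPrincipal nadd (ω ^ e)) :
    IsPrincipal nadd (ω ^ (e + 1)) := by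
  have hlt : ω ^ e < ω ^ (e + 1) := (opow_lt_opow_iff_right one_lt_omega0).2 (lt_add_one e)
  have split : ∀ x y, ω ^ e ≤ x → x < ω ^ (e + 1) → (x - ω ^ e) ♯ y < ω ^ (e + 1) →
      x ♯ y < ω ^ (e + 1) := by
    intro x y hx hx' hxy
    rw [← Ordinal.add_sub_cancel_of_le hx,
      omega0_opow_add_nadd_of_isPrincipal hP ((sub_le_self _ _).trans_lt hx') hxy]
    exact isPrincipal_add_omega0_opow _ hlt hxy
  intro a b ha hb
  induction a using WellFoundedLT.induction generalizing b with | _ a iha =>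
  induction b using WellFoundedLT.induction with | _ b ihb =>
  rcases lt_or_ge a (ω ^ e) with hae | hae
  · rcases lt_or_ge b (ω ^ e) with hbe | hbe
    · exact (hP hae hbe).trans hlt
    · have hb₁ := sub_omega0_opow_lt hbe hb
      rw [nadd_comm]
      exact split b a hbe hb (nadd_comm a _ ▸ ihb _ hb₁ (hb₁.trans hb))
  · have ha₁ := sub_omega0_opow_lt hae ha
    exact split a b hae ha (iha _ ha₁ (ha₁.trans ha) hb)

end Absorption

theorem isPrincipal_nadd_omega0_opow (e : Ordinal.{u}) : IsPrincipal nadd (ω ^ e) := by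
  induction e using WellFoundedLT.induction with | _ e ih =>
  intro a b ha hb
  rcases eq_or_ne a 0 with rfl | ha0
  · rwa [zero_nadd]
  rcases eq_or_ne b 0 with rfl | hb0
  · rwa [nadd_zero]
  set d := max (log ω a) (log ω b)
  have hd : d < e := max_lt ((lt_opow_iff_log_lt one_lt_omega0 ha0).1 ha)
    ((lt_opow_iff_log_lt one_lt_omega0 hb0).1 hb)
  have hlt : ∀ x, log ω x ≤ d → x < ω ^ (d + 1) := fun x hx =>
    (lt_omega0_opow_log_add_one x).trans_le (opow_le_opow_right omega0_pos (by gcongr))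
  exact (isPrincipal_nadd_omega0_opow_succ (ih d hd) (hlt a (le_max_left _ _))
    (hlt b (le_max_right _ _))).trans_le (opow_le_opow_right omega0_pos (Order.add_one_le_of_lt hd))

theorem omega0_opow_add_nadd {e a c : Ordinal.{u}} (ha : a < ω ^ (e + 1)) (hc : c < ω ^ (e + 1)) :
    (ω ^ e + a) ♯ c = ω ^ e + (a ♯ c) :=
  omega0_opow_add_nadd_of_isPrincipal (isPrincipal_nadd_omega0_opow e) ha
    (isPrincipal_nadd_omega0_opow (e + 1) ha hc)

end Ordinal

theorem omega0_opow_eps0 : ω ^ eps0 = eps0 :=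
  csInf_mem (s := {ξ : Ordinal | ω ^ ξ = ξ})
    ⟨nfp (ω ^ ·) 0, nfp_fp (isNormal_opow one_lt_omega0) 0⟩

theorem isPrincipal_nadd_eps0 : IsPrincipal Ordinal.nadd eps0 :=
  omega0_opow_eps0 ▸ isPrincipal_nadd_omega0_opow eps0

namespace IsMatula

variable {M : Ordinal → ℕ} {α β : Ordinal}

theorem apply_of_ne_zero (hM : IsMatula M) (hα : α < eps0) (hα0 : α ≠ 0) :
    M α = Nat.nth Nat.Prime (M (log ω α)) * M (α - ω ^ log ω α) := by
  set e := log ω α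
  set a := α - ω ^ e
  have hα_eq : ω ^ e + a = α := Ordinal.add_sub_cancel_of_le (opow_log_le_self ω hα0)
  conv_lhs => rw [← hα_eq]
  exact hM.2 e a (hα_eq ▸ hα) ((Ordinal.sub_le_self _ _).trans_lt (lt_omega0_opow_log_add_one α))

theorem apply_nadd_of_log_le (hM : IsMatula M) (hα : α < eps0) (hβ : β < eps0) (hα0 : α ≠ 0)
    (hlog : log ω β ≤ log ω α) :
    M (α ♯ β) = Nat.nth Nat.Prime (M (log ω α)) * M ((α - ω ^ log ω α) ♯ β) := by
  set e := log ω α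
  set a := α - ω ^ e
  have hα_eq : ω ^ e + a = α := Ordinal.add_sub_cancel_of_le (opow_log_le_self ω hα0)
  have ha : a < ω ^ (e + 1) := (Ordinal.sub_le_self _ _).trans_lt (lt_omega0_opow_log_add_one α)
  have hβe : β < ω ^ (e + 1) :=
    (lt_omega0_opow_log_add_one β).trans_le (opow_le_opow_right omega0_pos (by gcongr))
  have hαβ : α ♯ β = ω ^ e + (a ♯ β) := hα_eq ▸ omega0_opow_add_nadd ha hβe
  rw [hαβ]
  exact hM.2 e _ (hαβ ▸ isPrincipal_nadd_eps0 hα hβ) (isPrincipal_nadd_omega0_opow _ ha hβe)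

end IsMatula

open NaturalOps in
/-- The Matula coding is multiplicative with respect to the Hessenberg natural sum:
`M (α ♯ β) = M α * M β` for all `α, β < ε₀`. -/
theorem matula_multiplicative (M : Ordinal → ℕ) (hM : IsMatula M) :
    ∀ α β : Ordinal, α < eps0 → β < eps0 → M (α ♯ β) = M α * M β := by
  intro α β hα hβ
  induction α using WellFoundedLT.induction generalizing β with | _ α ihα =>
  induction β using WellFoundedLT.induction with | _ β ihβ =>
  rcases eq_or_ne α 0 with rfl | hα0
  · rw [zero_nadd, hM.1, one_mul]
  rcases eq_or_ne β 0 with rfl | hβ0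
  · rw [nadd_zero, hM.1, mul_one]
  rcases le_total (log ω β) (log ω α) with hlog | hlog
  · have hα' := sub_omega0_opow_log_lt hα0
    rw [hM.apply_nadd_of_log_le hα hβ hα0 hlog, ihα _ hα' β (hα'.trans hα) hβ,
      hM.apply_of_ne_zero hα hα0, mul_assoc]
  · have hβ' := sub_omega0_opow_log_lt hβ0
    rw [nadd_comm, hM.apply_nadd_of_log_le hβ hα hβ0 hlog, nadd_comm, ihβ _ hβ' (hβ'.trans hβ),
      hM.apply_of_ne_zero hβ hβ0, mul_left_comm]
end

section
/- For each r ≥ 0, the number of ordinals α < ω^{r+1} with N(α) = n equals the number of solutions in nonnegative integers (l_r, …, l_0) of (r+1)·l_r + r·l_{r-1} + ⋯ + 1·l_0 = n; in other words, c_{ω^{r+1}}(n) is the number of partitions of n into parts of size at most r+1. -/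
open Ordinal

/-- `N` is the norm function on ordinals below `ε₀`: `N 0 = 0` and
`N (ω^e + b) = 1 + N e + N b` when `ω^e + b` is in Cantor normal form
(i.e. `b < ω^(e+1)`).  Thus `N α` is the number of occurrences of `ω` in the
hereditary Cantor normal form of `α`. -/
def IsNorm (N : Ordinal → ℕ) : Prop :=
  N 0 = 0 ∧
    ∀ e b : Ordinal, omega0 ^ e + b < eps0 → b < omega0 ^ (e + 1) →
      N (omega0 ^ e + b) = 1 + N e + N b

/-!
Below `ω ^ r` every ordinal is uniquely `ω ^ (r - 1) * l (r - 1) + ⋯ + ω ^ 0 * l 0` with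
natural digits `l i` (divide by `ω ^ (r - 1)` and recurse on the remainder). Peeling off the
copies of `ω ^ i` one at a time with the recursion defining `N` shows that such an ordinal has
norm `∑ i, (i + 1) * l i`. A digit vector of weight `n` is in turn the same thing as a partition
of `n` with parts at most `r`, the part `i + 1` occurring `l i` times.
-/

lemma omega0_opow_omega0_le_eps0 : ω ^ ω ≤ eps0 := by
  have hfix : ω ^ eps0 = eps0 :=
    csInf_mem (s := {ξ : Ordinal | ω ^ ξ = ξ})
      ⟨nfp (ω ^ ·) 0, nfp_fp (isNormal_opow one_lt_omega0) 0⟩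
  have hne : eps0 ≠ 0 := fun h => by rw [h, opow_zero] at hfix; exact one_ne_zero hfix
  calc ω ^ ω ≤ ω ^ eps0 := by
        refine opow_le_opow_right omega0_pos ?_
        simpa [hfix] using opow_le_opow_right omega0_pos (Order.one_le_iff_ne_zero.2 hne)
    _ = eps0 := hfix

lemma omega0_opow_natCast_le_eps0 (k : ℕ) : ω ^ (k : Ordinal) ≤ eps0 :=
  (opow_le_opow_right omega0_pos (natCast_lt_omega0 k).le).trans omega0_opow_omega0_le_eps0

lemma Ordinal.mul_add_eq_mul_add_iff {a a' b c c' : Ordinal} (hc : c < b) (hc' : c' < b) :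
    b * a + c = b * a' + c' ↔ a = a' ∧ c = c' := by
  refine ⟨fun h => ?_, fun ⟨ha, hc⟩ => ha ▸ hc ▸ rfl⟩
  have hb : b ≠ 0 := (pos_of_gt hc).ne'
  have ha : a = a' := by
    simpa [mul_add_div _ hb, div_eq_zero_of_lt hc, div_eq_zero_of_lt hc'] using congrArg (· / b) h
  exact ⟨ha, add_left_cancel (ha ▸ h)⟩

/-- `ofOmegaDigits l = ω ^ (r - 1) * l (r - 1) + ⋯ + ω ^ 0 * l 0`. -/
noncomputable def ofOmegaDigits : {r : ℕ} → (Fin r → ℕ) → Ordinal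
  | 0, _ => 0
  | r + 1, l => ω ^ (r : Ordinal) * l (Fin.last r) + ofOmegaDigits (Fin.init l)

lemma ofOmegaDigits_succ {r : ℕ} (l : Fin (r + 1) → ℕ) :
    ofOmegaDigits l = ω ^ (r : Ordinal) * l (Fin.last r) + ofOmegaDigits (Fin.init l) := rfl

lemma ofOmegaDigits_lt : ∀ {r : ℕ} (l : Fin r → ℕ), ofOmegaDigits l < ω ^ (r : Ordinal)
  | 0, _ => by simp [ofOmegaDigits]
  | r + 1, l => by
    rw [ofOmegaDigits_succ, Nat.cast_succ]
    exact opow_mul_add_lt_opow (natCast_lt_omega0 _) (ofOmegaDigits_lt _) (lt_add_one _)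

lemma ofOmegaDigits_injective : ∀ {r : ℕ}, Function.Injective (ofOmegaDigits (r := r))
  | 0, _, _, _ => Subsingleton.elim _ _
  | r + 1, l, l', h => by
    rw [ofOmegaDigits_succ, ofOmegaDigits_succ,
      mul_add_eq_mul_add_iff (ofOmegaDigits_lt _) (ofOmegaDigits_lt _), Nat.cast_inj] at h
    rw [← Fin.snoc_init_self l, ← Fin.snoc_init_self l', h.1, ofOmegaDigits_injective h.2]

lemma exists_ofOmegaDigits_eq : ∀ {r : ℕ} {α : Ordinal}, α < ω ^ (r : Ordinal) →
    ∃ l : Fin r → ℕ, ofOmegaDigits l = α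
  | 0, α, hα => ⟨Fin.elim0, by simpa [ofOmegaDigits, eq_comm] using hα⟩
  | r + 1, α, hα => by
    have hpos : ω ^ (r : Ordinal) ≠ 0 := (opow_pos _ omega0_pos).ne'
    obtain ⟨m, hm⟩ : ∃ m : ℕ, α / ω ^ (r : Ordinal) = m := by
      rw [← lt_omega0, ← lt_mul_iff_div_lt hpos, ← opow_succ, Order.succ_eq_add_one,
        ← Nat.cast_succ]
      exact hα
    obtain ⟨l, hl⟩ := exists_ofOmegaDigits_eq (mod_lt α hpos)
    refine ⟨Fin.snoc l m, ?_⟩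
    rw [ofOmegaDigits_succ, Fin.snoc_last, Fin.init_snoc, hl, ← hm, div_add_mod]

namespace IsNorm

variable {N : Ordinal → ℕ}

lemma apply_opow_mul_add (hN : IsNorm N) {e b : Ordinal} (he : ω ^ (e + 1) ≤ eps0)
    (hb : b < ω ^ e) (m : ℕ) : N (ω ^ e * m + b) = (1 + N e) * m + N b := by
  have hlt (k : ℕ) : ω ^ e * k + b < ω ^ (e + 1) :=
    opow_mul_add_lt_opow (natCast_lt_omega0 k) hb (lt_add_one e)
  induction m with
  | zero => simp
  | succ m ih =>
    have hsplit : ω ^ e * (m + 1 : ℕ) + b = ω ^ e + (ω ^ e * m + b) := by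
      rw [Nat.cast_succ, Nat.cast_add_one_comm, mul_add, mul_one, add_assoc]
    rw [hsplit, hN.2 e _ (hsplit ▸ (hlt _).trans_le he) (hlt m), ih]
    ring

lemma apply_natCast (hN : IsNorm N) (k : ℕ) : N k = k := by
  simpa [hN.1] using hN.apply_opow_mul_add (e := 0) (b := 0)
    (by simpa using omega0_opow_natCast_le_eps0 1) (by simp) k

lemma apply_ofOmegaDigits (hN : IsNorm N) :
    ∀ {r : ℕ} (l : Fin r → ℕ), N (ofOmegaDigits l) = ∑ i, (i.1 + 1) * l i
  | 0, _ => hN.1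
  | r + 1, l => by
    have he : ω ^ ((r : Ordinal) + 1) ≤ eps0 := mod_cast omega0_opow_natCast_le_eps0 (r + 1)
    rw [ofOmegaDigits_succ, hN.apply_opow_mul_add he (ofOmegaDigits_lt _), hN.apply_natCast,
      hN.apply_ofOmegaDigits, Fin.sum_univ_castSucc]
    simp only [Fin.init, Fin.val_castSucc, Fin.val_last]
    ring

lemma ncard_lt_omega0_opow_eq_ncard_weighted (hN : IsNorm N) (r n : ℕ) :
    {α : Ordinal | α < ω ^ (r : Ordinal) ∧ N α = n}.ncard
      = {l : Fin r → ℕ | ∑ i, (i.1 + 1) * l i = n}.ncard := by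
  symm
  refine Set.ncard_congr (fun l _ => ofOmegaDigits l) ?_ ?_ ?_
  · intro l hl
    exact ⟨ofOmegaDigits_lt l, (hN.apply_ofOmegaDigits l).trans hl⟩
  · exact fun _ _ _ _ h => ofOmegaDigits_injective h
  · rintro α ⟨hα, hNα⟩
    obtain ⟨l, rfl⟩ := exists_ofOmegaDigits_eq hα
    exact ⟨l, (hN.apply_ofOmegaDigits l).symm.trans hNα, rfl⟩

end IsNorm

def partsOfCounts {r : ℕ} (l : Fin r → ℕ) : Multiset ℕ :=
  ∑ i, Multiset.replicate (l i) (i.1 + 1)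

lemma pos_and_le_of_mem_partsOfCounts {r : ℕ} {l : Fin r → ℕ} {x : ℕ}
    (hx : x ∈ partsOfCounts l) : 0 < x ∧ x ≤ r := by
  obtain ⟨i, -, hi⟩ := Multiset.mem_sum.1 hx
  rw [Multiset.eq_of_mem_replicate hi]
  omega

lemma count_partsOfCounts {r : ℕ} (l : Fin r → ℕ) (i : Fin r) :
    (partsOfCounts l).count (i.1 + 1) = l i := by
  rw [partsOfCounts, Multiset.count_sum', Finset.sum_eq_single i]
  · simp
  · intro j _ hji
    rw [Multiset.count_replicate, if_neg fun h => hji (Fin.ext (by omega))]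
  · simp

lemma sum_partsOfCounts {r : ℕ} (l : Fin r → ℕ) :
    (partsOfCounts l).sum = ∑ i, (i.1 + 1) * l i := by
  simp [partsOfCounts, Multiset.sum_sum, mul_comm]

lemma partsOfCounts_count {r : ℕ} {s : Multiset ℕ} (hs : ∀ x ∈ s, 0 < x ∧ x ≤ r) :
    partsOfCounts (fun i : Fin r => s.count (i.1 + 1)) = s := by
  ext a
  by_cases ha : 0 < a ∧ a ≤ r
  · obtain ⟨i, rfl⟩ : ∃ i : Fin r, i.1 + 1 = a :=
      ⟨⟨a - 1, by omega⟩, Nat.sub_add_cancel ha.1⟩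
    exact count_partsOfCounts _ i
  · rw [Multiset.count_eq_zero_of_notMem fun h => ha (hs a h),
      Multiset.count_eq_zero_of_notMem fun h => ha (pos_and_le_of_mem_partsOfCounts h)]

lemma ncard_weighted_eq_ncard_partition_parts_le (r n : ℕ) :
    {l : Fin r → ℕ | ∑ i, (i.1 + 1) * l i = n}.ncard
      = {p : n.Partition | ∀ x ∈ p.parts, x ≤ r}.ncard := by
  refine Set.ncard_congr
    (fun l hl => Nat.Partition.ofSums n (partsOfCounts l) ((sum_partsOfCounts l).trans hl))
    ?_ ?_ ?_
  · intro l _ x hx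
    exact (pos_and_le_of_mem_partsOfCounts (Multiset.mem_of_mem_filter hx)).2
  · intro l l' _ _ h
    funext i
    have := congrArg (fun p : n.Partition => p.parts.count (i.1 + 1)) h
    simpa only [Nat.Partition.count_ofSums_of_ne_zero _ i.1.succ_ne_zero, count_partsOfCounts]
      using this
  · intro p hp
    have hs (x : ℕ) (hx : x ∈ p.parts) : 0 < x ∧ x ≤ r := ⟨p.parts_pos hx, hp x hx⟩
    refine ⟨fun i => p.parts.count (i.1 + 1), ?_, ?_⟩
    · rw [Set.mem_ofPred_eq, ← sum_partsOfCounts, partsOfCounts_count hs, p.parts_sum]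
    · ext1
      rw [Nat.Partition.ofSums_parts, partsOfCounts_count hs,
        Multiset.filter_eq_self.2 fun x hx => (hs x hx).1.ne']

/-- `c_{ω^{r+1}}(n)` equals the number of nonnegative integer solutions of
`(r+1)·l_r + ⋯ + 1·l_0 = n`, i.e. the number of partitions of `n` into parts
of size at most `r+1`. -/
theorem count_below_omega_pow_succ (N : Ordinal → ℕ) (hN : IsNorm N) (r n : ℕ) :
    {α : Ordinal | α < omega0 ^ ((r : Ordinal) + 1) ∧ N α = n}.ncard
        = {l : Fin (r + 1) → ℕ | ∑ i, (i.1 + 1) * l i = n}.ncard ∧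
      {α : Ordinal | α < omega0 ^ ((r : Ordinal) + 1) ∧ N α = n}.ncard
        = {p : n.Partition | ∀ x ∈ p.parts, x ≤ r + 1}.ncard := by
  have hdigits := hN.ncard_lt_omega0_opow_eq_ncard_weighted (r + 1) n
  rw [Nat.cast_succ] at hdigits
  exact ⟨hdigits, hdigits.trans (ncard_weighted_eq_ncard_partition_parts_le (r + 1) n)⟩
end

section
/- Let r ≥ 0. If L and L' are linear subsets of ω^{r+1}, i.e., L = {ω^r·(a_r + b_r·l_r) + ⋯ + ω^0·(a_0 + b_0·l_0) : l_i ∈ ℕ} and similarly L' with parameters a'_i, b'_i, then L ∩ L' is either empty or again a linear subset of ω^{r+1} of the same shape. -/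
open Ordinal Set

/-- The ordinal `ω^r · k r + ω^{r-1} · k (r-1) + ⋯ + ω^0 · k 0` (terms in decreasing
order of exponents). -/
noncomputable def ordOf (r : ℕ) (k : ℕ → ℕ) : Ordinal :=
  ((List.range (r + 1)).reverse.map fun i : ℕ => omega0 ^ (i : Ordinal) * ((k i : ℕ) : Ordinal)).foldr
    (· + ·) 0

/-- The linear subset of `ω^{r+1}` with parameters `a_i, b_i`:
`{ω^r·(a_r + b_r l_r) + ⋯ + ω^0·(a_0 + b_0 l_0) : l_i ∈ ℕ}`. -/
noncomputable def linSet (r : ℕ) (a b : ℕ → ℕ) : Set Ordinal :=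
  {α | ∃ l : ℕ → ℕ, α = ordOf r fun i => a i + b i * l i}

namespace Nat

theorem mem_range_add_mul_iff {c b x : ℕ} : x ∈ range (c + b * ·) ↔ c ≤ x ∧ b ∣ x - c := by
  constructor
  · rintro ⟨l, rfl⟩
    simp
  · rintro ⟨hcx, l, hl⟩
    exact ⟨l, by dsimp only; omega⟩

theorem mem_range_add_mul_iff_of_mem {a b c x : ℕ} (hc : c ∈ range (a + b * ·)) (hcx : c ≤ x) :
    x ∈ range (a + b * ·) ↔ b ∣ x - c := by
  obtain ⟨m, rfl⟩ := hc
  dsimp only at hcx ⊢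
  have hx : x - a = b * m + (x - (a + b * m)) := by omega
  rw [mem_range_add_mul_iff, hx, Nat.dvd_add_right (dvd_mul_right b m)]
  exact and_iff_right (by omega)

theorem range_add_mul_inter_eq_of_isLeast {a b a' b' c : ℕ}
    (hc : IsLeast (range (a + b * ·) ∩ range (a' + b' * ·)) c) :
    range (a + b * ·) ∩ range (a' + b' * ·) = range (c + Nat.lcm b b' * ·) := by
  obtain ⟨⟨hca, hca'⟩, hleast⟩ := hc
  ext x
  rw [mem_range_add_mul_iff]
  constructor
  · intro hx
    have hcx : c ≤ x := hleast hx
    exact ⟨hcx, Nat.lcm_dvd ((mem_range_add_mul_iff_of_mem hca hcx).1 hx.1)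
      ((mem_range_add_mul_iff_of_mem hca' hcx).1 hx.2)⟩
  · rintro ⟨hcx, hdvd⟩
    exact ⟨(mem_range_add_mul_iff_of_mem hca hcx).2 ((Nat.dvd_lcm_left b b').trans hdvd),
      (mem_range_add_mul_iff_of_mem hca' hcx).2 ((Nat.dvd_lcm_right b b').trans hdvd)⟩

end Nat

theorem ordOf_zero (k : ℕ → ℕ) : ordOf 0 k = k 0 := by
  simp [ordOf]

theorem ordOf_succ (r : ℕ) (k : ℕ → ℕ) :
    ordOf (r + 1) k = ω ^ ((r + 1 : ℕ) : Ordinal) * k (r + 1) + ordOf r k := by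
  rw [ordOf, List.range_succ, List.reverse_append, List.reverse_singleton, List.singleton_append,
    List.map_cons, List.foldr_cons]
  rfl

theorem ordOf_lt_opow (r : ℕ) (k : ℕ → ℕ) : ordOf r k < ω ^ ((r + 1 : ℕ) : Ordinal) := by
  induction r with
  | zero => simp [ordOf_zero]
  | succ r ih =>
    rw [ordOf_succ]
    exact opow_mul_add_lt_opow (natCast_lt_omega0 _) ih (by exact_mod_cast (r + 1).lt_succ_self)

theorem ordOf_succ_div (r : ℕ) (k : ℕ → ℕ) :
    ordOf (r + 1) k / ω ^ ((r + 1 : ℕ) : Ordinal) = k (r + 1) := by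
  rw [ordOf_succ, mul_add_div _ (opow_ne_zero _ omega0_ne_zero),
    div_eq_zero_of_lt (ordOf_lt_opow r k), add_zero]

theorem ordOf_succ_mod (r : ℕ) (k : ℕ → ℕ) :
    ordOf (r + 1) k % ω ^ ((r + 1 : ℕ) : Ordinal) = ordOf r k := by
  rw [ordOf_succ, mul_add_mod_self, mod_eq_of_lt (ordOf_lt_opow r k)]

theorem ordOf_eq_ordOf_iff {r : ℕ} {k k' : ℕ → ℕ} :
    ordOf r k = ordOf r k' ↔ ∀ i ≤ r, k i = k' i := by
  induction r with
  | zero => simp [ordOf_zero]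
  | succ r ih =>
    constructor
    · intro h i hi
      rcases hi.lt_or_eq with hi | rfl
      · rw [← ordOf_succ_mod r k, ← ordOf_succ_mod r k', h] at ih
        exact ih.1 rfl i (Nat.le_of_lt_succ hi)
      · have hdigit := ordOf_succ_div r k
        rw [h, ordOf_succ_div] at hdigit
        exact_mod_cast hdigit.symm
    · intro h
      rw [ordOf_succ, ordOf_succ, h (r + 1) le_rfl,
        ih.2 fun i hi => h i (hi.trans r.le_succ)]

theorem image_ordOf_pi_inter (r : ℕ) (S T : ℕ → Set ℕ) :
    ordOf r '' (Iic r).pi S ∩ ordOf r '' (Iic r).pi T =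
      ordOf r '' (Iic r).pi fun i => S i ∩ T i := by
  refine Subset.antisymm ?_ (pi_inter_distrib ▸ image_inter_subset _ _ _)
  rintro _ ⟨⟨k, hk, rfl⟩, k', hk', hkk'⟩
  have hcoord : ∀ i ≤ r, k' i = k i := ordOf_eq_ordOf_iff.1 hkk'
  exact ⟨k, fun i hi => ⟨hk i hi, hcoord i hi ▸ hk' i hi⟩, rfl⟩

theorem linSet_eq_image_pi (r : ℕ) (a b : ℕ → ℕ) :
    linSet r a b = ordOf r '' (Iic r).pi fun i => range (a i + b i * ·) := by
  ext α
  constructor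
  · rintro ⟨l, rfl⟩
    exact ⟨_, fun i _ => ⟨l i, rfl⟩, rfl⟩
  · rintro ⟨k, hk, rfl⟩
    have hk' : ∀ i, ∃ l, i ≤ r → a i + b i * l = k i := fun i =>
      if hi : i ≤ r then (hk i hi).imp fun _ h _ => h else ⟨0, fun h => absurd h hi⟩
    choose l hl using hk'
    exact ⟨l, ordOf_eq_ordOf_iff.2 fun i hi => (hl i hi).symm⟩

theorem linSet_inter_linSet (r : ℕ) (a b a' b' : ℕ → ℕ) :
    linSet r a b ∩ linSet r a' b' =
      ordOf r '' (Iic r).pi fun i => range (a i + b i * ·) ∩ range (a' i + b' i * ·) := by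
  rw [linSet_eq_image_pi, linSet_eq_image_pi, image_ordOf_pi_inter]

/-- The intersection of two linear subsets of `ω^{r+1}` is empty or again linear. -/
theorem linSet_inter (r : ℕ) (a b a' b' : ℕ → ℕ) :
    linSet r a b ∩ linSet r a' b' = ∅ ∨
      ∃ a'' b'' : ℕ → ℕ, linSet r a b ∩ linSet r a' b' = linSet r a'' b'' := by
  simp only [linSet_inter_linSet]
  set S : ℕ → Set ℕ := fun i => range (a i + b i * ·) ∩ range (a' i + b' i * ·)
  by_cases hS : ∀ i ≤ r, (S i).Nonempty
  · refine Or.inr ⟨fun i => sInf (S i), fun i => Nat.lcm (b i) (b' i), ?_⟩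
    rw [linSet_eq_image_pi]
    exact congrArg _ <| pi_congr rfl fun i hi =>
      Nat.range_add_mul_inter_eq_of_isLeast (isLeast_csInf (hS i hi))
  · push Not at hS
    obtain ⟨i, hi, hSi⟩ := hS
    exact Or.inl <| by rw [pi_eq_empty (mem_Iic.2 hi) hSi, image_empty]
end

section
/- Schur's Tauberian theorem: let T(x) = ∑ tₙxⁿ have nonnegative coefficients with tₙ > 0 eventually and lim_{n→∞} tₙ/t_{n+1} = ρ ≥ 0, and let S(x) = ∑ sₙxⁿ have radius of convergence strictly greater than ρ. Then lim_{n→∞} ([xⁿ](S·T)) / ([xⁿ]T) = S(ρ). -/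
/-!
Pick `r` with `ρ < r` such that `∑ |sₖ| rᵏ` converges. Eventually `tₙ ≤ r tₙ₊₁`, so `rⁿ tₙ` is
eventually nondecreasing, and this gives a uniform bound `t_{n-k} / tₙ ≤ C rᵏ` for all large `n`
and all `k ≤ n`. For fixed `k` the ratio `t_{n-k} / tₙ` tends to `ρᵏ`, so Tannery's theorem applied
to `∑_{k ≤ n} sₖ t_{n-k} / tₙ`, dominated by `C |sₖ| rᵏ`, gives the limit `∑ sₖ ρᵏ`.
-/

open Filter Topology Finset

lemma exists_le_mul_of_monotoneOn_Ici {u : ℕ → ℝ} {N : ℕ} (hu : ∀ n, 0 ≤ u n) (huN : 0 < u N)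
    (hmono : MonotoneOn u (Set.Ici N)) : ∃ C, ∀ m, N ≤ m → ∀ i ≤ m, u i ≤ C * u m := by
  set B := ∑ i ∈ range (N + 1), u i
  have hle_B : ∀ i ≤ N, u i ≤ B := fun i hi =>
    single_le_sum (fun j _ => hu j) (mem_range.2 (Nat.lt_succ_of_le hi))
  have hC : 1 ≤ B / u N := (one_le_div huN).2 (hle_B N le_rfl)
  refine ⟨B / u N, fun m hm i him => ?_⟩
  rcases le_total i N with hiN | hNi
  · calc u i ≤ B := hle_B i hiN
      _ = B / u N * u N := (div_mul_cancel₀ B huN.ne').symm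
      _ ≤ B / u N * u m :=
        mul_le_mul_of_nonneg_left (hmono (Set.mem_Ici.2 le_rfl) hm hm) (zero_le_one.trans hC)
  · calc u i ≤ u m := hmono hNi hm him
      _ ≤ B / u N * u m := le_mul_of_one_le_left (hu m) hC

lemma exists_div_le_mul_pow_of_le_mul_succ {t : ℕ → ℝ} {r : ℝ} (hr : 0 < r)
    (ht : ∀ n, 0 ≤ t n) (hstep : ∀ᶠ n in atTop, 0 < t n ∧ t n ≤ r * t (n + 1)) :
    ∃ C, ∀ᶠ n in atTop, ∀ k ≤ n, t (n - k) / t n ≤ C * r ^ k := by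
  obtain ⟨N, hN⟩ := eventually_atTop.1 hstep
  have hmono : MonotoneOn (fun n => r ^ n * t n) (Set.Ici N) :=
    monotoneOn_nat_Ici_of_le_succ fun n hn => by
      rw [pow_succ, mul_assoc]
      exact mul_le_mul_of_nonneg_left (hN n hn).2 (by positivity)
  obtain ⟨C, hC⟩ := exists_le_mul_of_monotoneOn_Ici (fun n => by have := ht n; positivity)
    (mul_pos (pow_pos hr N) (hN N le_rfl).1) hmono
  refine ⟨C, eventually_atTop.2 ⟨N, fun n hn k hk => ?_⟩⟩
  rw [div_le_iff₀ (hN n hn).1]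
  have hpow : r ^ n = r ^ (n - k) * r ^ k := by rw [← pow_add, Nat.sub_add_cancel hk]
  refine le_of_mul_le_mul_left ?_ (pow_pos hr (n - k))
  calc r ^ (n - k) * t (n - k) ≤ C * (r ^ n * t n) := hC n hn (n - k) (Nat.sub_le n k)
    _ = r ^ (n - k) * (C * r ^ k * t n) := by rw [hpow]; ring

lemma tendsto_div_add_pow_of_tendsto_div_succ {t : ℕ → ℝ} {ρ : ℝ} (ht : ∀ᶠ n in atTop, t n ≠ 0)
    (hratio : Tendsto (fun n => t n / t (n + 1)) atTop (𝓝 ρ)) (k : ℕ) :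
    Tendsto (fun n => t n / t (n + k)) atTop (𝓝 (ρ ^ k)) := by
  induction k with
  | zero =>
    rw [pow_zero]
    refine tendsto_const_nhds.congr' ?_
    filter_upwards [ht] with n hn
    simp [hn]
  | succ k ih =>
    have h := hratio.mul (ih.comp (tendsto_add_atTop_nat 1))
    rw [← pow_succ'] at h
    refine h.congr' ?_
    filter_upwards [(tendsto_add_atTop_nat 1).eventually ht] with n hn
    rw [Function.comp_apply, show n + 1 + k = n + (k + 1) by ring]
    field_simp

lemma tendsto_div_sub_pow_of_tendsto_div_succ {t : ℕ → ℝ} {ρ : ℝ} (ht : ∀ᶠ n in atTop, t n ≠ 0)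
    (hratio : Tendsto (fun n => t n / t (n + 1)) atTop (𝓝 ρ)) (k : ℕ) :
    Tendsto (fun n => t (n - k) / t n) atTop (𝓝 (ρ ^ k)) := by
  refine ((tendsto_div_add_pow_of_tendsto_div_succ ht hratio k).comp
    (tendsto_sub_atTop_nat k)).congr' ?_
  filter_upwards [eventually_ge_atTop k] with n hn
  rw [Function.comp_apply, Nat.sub_add_cancel hn]

lemma tendsto_sum_range_of_dominated_convergence {G : Type*} [NormedAddCommGroup G]
    [CompleteSpace G] {g : ℕ → ℕ → G} {a : ℕ → G} {bound : ℕ → ℝ} (h_sum : Summable bound)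
    (hlim : ∀ k, Tendsto (g · k) atTop (𝓝 (a k)))
    (h_bound : ∀ᶠ n in atTop, ∀ k ≤ n, ‖g n k‖ ≤ bound k) :
    Tendsto (fun n => ∑ k ∈ range (n + 1), g n k) atTop (𝓝 (∑' k, a k)) := by
  set f : ℕ → ℕ → G := fun n k => if k ≤ n then g n k else 0
  have hf : ∀ n, ∑' k, f n k = ∑ k ∈ range (n + 1), g n k := fun n => by
    rw [tsum_eq_sum (s := range (n + 1)) fun k hk => if_neg (by simpa using hk)]
    exact sum_congr rfl fun k hk => if_pos (Nat.lt_succ_iff.1 (mem_range.1 hk))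
  have hbound_nonneg : ∀ k, 0 ≤ bound k := fun k =>
    let ⟨n, hn, hkn⟩ := (h_bound.and (eventually_ge_atTop k)).exists
    (norm_nonneg _).trans (hn k hkn)
  refine (tendsto_tsum_of_dominated_convergence h_sum (fun k => ?_) ?_).congr hf
  · refine (hlim k).congr' ?_
    filter_upwards [eventually_ge_atTop k] with n hn
    exact (if_pos hn).symm
  · filter_upwards [h_bound] with n hn k
    by_cases hk : k ≤ n
    · simpa [f, hk] using hn k hk
    · simpa [f, hk] using hbound_nonneg k

open Filter in
/-- Schur's Tauberian theorem: if `T(x) = ∑ tₙ xⁿ` has nonnegative coefficients which are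
eventually positive and satisfy `tₙ/t_{n+1} → ρ ≥ 0`, and `S(x) = ∑ sₙ xⁿ` has radius of
convergence strictly greater than `ρ`, then `[xⁿ](S·T) / [xⁿ]T → S(ρ)`. -/
theorem schur_tauberian (ρ : ℝ) (hρ : 0 ≤ ρ) (t s : ℕ → ℝ)
    (ht0 : ∀ n, 0 ≤ t n) (htpos : ∀ᶠ n in atTop, 0 < t n)
    (hratio : Tendsto (fun n => t n / t (n + 1)) atTop (nhds ρ))
    (hS : ∃ x : ℝ, ρ < x ∧ Summable (fun n => |s n| * x ^ n)) :
    Tendsto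
      (fun n : ℕ => (∑ k ∈ Finset.range (n + 1), s k * t (n - k)) / t n) atTop
      (nhds (∑' n : ℕ, s n * ρ ^ n)) := by
  obtain ⟨x, hρx, hsx⟩ := hS
  obtain ⟨r, hρr, hrx⟩ := exists_between hρx
  have hr : 0 < r := hρ.trans_lt hρr
  have hsr : Summable (fun k => |s k| * r ^ k) :=
    hsx.of_nonneg_of_le (fun k => by positivity) fun k =>
      mul_le_mul_of_nonneg_left (pow_le_pow_left₀ hr.le hrx.le k) (abs_nonneg _)
  have hstep : ∀ᶠ n in atTop, 0 < t n ∧ t n ≤ r * t (n + 1) := by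
    filter_upwards [htpos, (tendsto_add_atTop_nat 1).eventually htpos,
      hratio.eventually (eventually_lt_nhds hρr)] with n hn hn1 hlt
    exact ⟨hn, ((div_lt_iff₀ hn1).1 hlt).le⟩
  obtain ⟨C, hC⟩ := exists_div_le_mul_pow_of_le_mul_succ hr ht0 hstep
  refine (tendsto_sum_range_of_dominated_convergence (g := fun n k => s k * (t (n - k) / t n))
    (hsr.mul_left C) (fun k => ?_) ?_).congr fun n => ?_
  · exact (tendsto_div_sub_pow_of_tendsto_div_succ (htpos.mono fun n hn => hn.ne') hratio
      k).const_mul (s k)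
  · filter_upwards [hC] with n hn k hk
    rw [Real.norm_eq_abs, abs_mul, abs_of_nonneg (div_nonneg (ht0 _) (ht0 _))]
    calc |s k| * (t (n - k) / t n) ≤ |s k| * (C * r ^ k) :=
          mul_le_mul_of_nonneg_left (hn k hk) (abs_nonneg _)
      _ = C * (|s k| * r ^ k) := by ring
  · rw [sum_div]
    exact sum_congr rfl fun k _ => (mul_div_assoc _ _ _).symm
end
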